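/- Let k > 0 and a, b ∈ ℝ with |a + b| < k. Then there exist constants K₁, K₂, K₃ > 0 depending only on a, b, k (and not on n) such that for every n ∈ ℕ, all continuous inputs u, w : [0,∞) → ℝ, every ξ = (ξ_1,…,ξ_n) ∈ ℝ^n, and every solution (x_1,…,x_n) of the linear string x_i'(t) = a·x_{i−1}(t) − k·x_i(t) + b·x_{i+1}(t) (with x_0 := u, x_{n+1} := w) and x_i(0) = ξ_i, one has ‖x_i‖_{[0,t],2} ≤ K₁·‖u‖_{[0,t],2} + K₂·‖w‖_{[0,t],2} + K₃·(Σ_{j=1}^{n} ξ_j²)^{1/2} for all t ≥ 0 and all i = 1,…,n. -/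

import Mathlib

/-- The `L²` norm of a real-valued signal on the interval `[0, t]`. -/
noncomputable def l2Norm (y : ℝ → ℝ) (t : ℝ) : ℝ :=
  Real.sqrt (∫ s in (0:ℝ)..t, (y s) ^ 2)

/-!
The energy `V = ∑ xᵢ²` is a Lyapunov function for the string. Summation by parts turns `V'` into
`2 (a + b) ∑ xᵢ xᵢ₊₁ - 2 k V` plus the boundary terms `2 a x₁ u` and `2 b xₙ w`; the bound
`2 |xᵢ xᵢ₊₁| ≤ xᵢ² + xᵢ₊₁²` and Young's inequality at the two ends give
`V' ≤ -c V + (2 a² / c) u² + (2 b² / c) w²` with `c = k - |a + b| > 0`. Integrating over `[0, t]`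
and dropping `V t ≥ 0` bounds `c ∫ V`, and hence every `∫ xᵢ²`, by `V 0` and the input energies,
with constants that do not depend on `n`.
-/

open Finset MeasureTheory

theorem two_mul_le_mul_sq_add_sq_div {ε : ℝ} (hε : 0 < ε) (p q : ℝ) :
    2 * p * q ≤ ε * p ^ 2 + q ^ 2 / ε := by
  have h : ε * p ^ 2 + q ^ 2 / ε - 2 * p * q = (ε * p - q) ^ 2 / ε := by
    field_simp; ring
  rw [← sub_nonneg, h]
  positivity

theorem le_sq_sqrt_add_one (x : ℝ) : x ≤ (√x + 1) ^ 2 := by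
  rcases le_total 0 x with hx | hx
  · nlinarith [Real.sq_sqrt hx, Real.sqrt_nonneg x]
  · nlinarith

theorem sqrt_mul_add_mul_add_mul_le {A B C K₁ K₂ K₃ p q r : ℝ}
    (hK₁ : 0 ≤ K₁) (hK₂ : 0 ≤ K₂) (hK₃ : 0 ≤ K₃) (hA : A ≤ K₁ ^ 2) (hB : B ≤ K₂ ^ 2)
    (hC : C ≤ K₃ ^ 2) (hp : 0 ≤ p) (hq : 0 ≤ q) (hr : 0 ≤ r) :
    √(A * p + B * q + C * r) ≤ K₁ * √p + K₂ * √q + K₃ * √r := by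
  have h₁ : 0 ≤ K₁ * √p := by positivity
  have h₂ : 0 ≤ K₂ * √q := by positivity
  have h₃ : 0 ≤ K₃ * √r := by positivity
  rw [Real.sqrt_le_left (by positivity)]
  calc A * p + B * q + C * r ≤ (K₁ * √p) ^ 2 + (K₂ * √q) ^ 2 + (K₃ * √r) ^ 2 := by
        rw [mul_pow, mul_pow, mul_pow, Real.sq_sqrt hp, Real.sq_sqrt hq, Real.sq_sqrt hr]
        gcongr
    _ ≤ (K₁ * √p + K₂ * √q + K₃ * √r) ^ 2 := by
        nlinarith [mul_nonneg h₁ h₂, mul_nonneg h₁ h₃, mul_nonneg h₂ h₃]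

theorem sum_Icc_mul_neighbours (a b : ℝ) (y : ℕ → ℝ) (m : ℕ) :
    ∑ i ∈ Icc 1 (m + 1), y i * (a * y (i - 1) + b * y (i + 1)) =
      (a + b) * ∑ i ∈ Icc 1 m, y i * y (i + 1) + a * y 1 * y 0 + b * y (m + 1) * y (m + 2) := by
  induction m with
  | zero =>
    simp only [zero_add, Icc_self, sum_singleton, Nat.sub_self, Icc_eq_empty_of_lt zero_lt_one,
      sum_empty]
    ring
  | succ m ih =>
    rw [sum_Icc_succ_top (by omega), ih, sum_Icc_succ_top (by omega : 1 ≤ m + 1)]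
    simp only [Nat.add_sub_cancel]
    ring

theorem sum_Icc_add_one_le (f : ℕ → ℝ) (hf : ∀ i, 0 ≤ f i) (m : ℕ) :
    ∑ i ∈ Icc 1 m, f (i + 1) ≤ ∑ i ∈ Icc 1 (m + 1), f i := by
  have hshift : ∑ i ∈ Icc 1 m, f (i + 1) = ∑ i ∈ Icc 2 (m + 1), f i := by
    rw [← map_add_right_Icc 1 m 1, sum_map]; rfl
  rw [hshift]
  exact sum_le_sum_of_subset_of_nonneg (Icc_subset_Icc_left one_le_two) fun i _ _ => hf i

theorem abs_sum_Icc_mul_succ_le (y : ℕ → ℝ) (m : ℕ) :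
    |∑ i ∈ Icc 1 m, y i * y (i + 1)| ≤ ∑ i ∈ Icc 1 (m + 1), y i ^ 2 := by
  have hlow : ∑ i ∈ Icc 1 m, y i ^ 2 ≤ ∑ i ∈ Icc 1 (m + 1), y i ^ 2 :=
    sum_le_sum_of_subset_of_nonneg (Icc_subset_Icc_right m.le_succ) fun i _ _ => sq_nonneg _
  have hup := sum_Icc_add_one_le (fun i => y i ^ 2) (fun i => sq_nonneg _) m
  calc |∑ i ∈ Icc 1 m, y i * y (i + 1)|
      ≤ ∑ i ∈ Icc 1 m, |y i * y (i + 1)| := abs_sum_le_sum_abs _ _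
    _ ≤ ∑ i ∈ Icc 1 m, (y i ^ 2 + y (i + 1) ^ 2) / 2 := by
        gcongr with i
        rw [abs_mul, ← sq_abs (y i), ← sq_abs (y (i + 1))]
        nlinarith [two_mul_le_add_sq |y i| |y (i + 1)|]
    _ ≤ ∑ i ∈ Icc 1 (m + 1), y i ^ 2 := by
        rw [← sum_div, sum_add_distrib]
        linarith

theorem string_energy_deriv_le {a b k : ℝ} (hc : 0 < k - |a + b|) (y : ℕ → ℝ) (n : ℕ) :
    ∑ i ∈ Icc 1 n, 2 * y i * (a * y (i - 1) - k * y i + b * y (i + 1)) ≤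
      -(k - |a + b|) * ∑ i ∈ Icc 1 n, y i ^ 2 + 2 * a ^ 2 / (k - |a + b|) * y 0 ^ 2 +
        2 * b ^ 2 / (k - |a + b|) * y (n + 1) ^ 2 := by
  rcases n with _ | m
  · have hpos : ∀ c : ℝ, 0 ≤ 2 * c ^ 2 / (k - |a + b|) := fun c => by positivity
    simpa using add_nonneg (mul_nonneg (hpos a) (sq_nonneg (y 0)))
      (mul_nonneg (hpos b) (sq_nonneg (y 1)))
  set V := ∑ i ∈ Icc 1 (m + 1), y i ^ 2
  have hsplit : ∑ i ∈ Icc 1 (m + 1), 2 * y i * (a * y (i - 1) - k * y i + b * y (i + 1)) =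
      2 * ∑ i ∈ Icc 1 (m + 1), y i * (a * y (i - 1) + b * y (i + 1)) - 2 * k * V := by
    rw [mul_sum, mul_sum, ← sum_sub_distrib]
    exact sum_congr rfl fun i _ => by ring
  rw [hsplit, sum_Icc_mul_neighbours]
  have hcross : (a + b) * ∑ i ∈ Icc 1 m, y i * y (i + 1) ≤ |a + b| * V :=
    calc _ ≤ |a + b| * |∑ i ∈ Icc 1 m, y i * y (i + 1)| := by rw [← abs_mul]; exact le_abs_self _
      _ ≤ |a + b| * V := by gcongr; exact abs_sum_Icc_mul_succ_le y m
  have hfirst : y 1 ^ 2 ≤ V := single_le_sum (f := fun i => y i ^ 2) (fun i _ => sq_nonneg _)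
    (by simp)
  have hlast : y (m + 1) ^ 2 ≤ V := single_le_sum (f := fun i => y i ^ 2) (fun i _ => sq_nonneg _)
    (by simp)
  have hc2 : 0 < (k - |a + b|) / 2 := half_pos hc
  have hleft := two_mul_le_mul_sq_add_sq_div hc2 (y 1) (a * y 0)
  have hright := two_mul_le_mul_sq_add_sq_div hc2 (y (m + 1)) (b * y (m + 2))
  have hfirst' := mul_le_mul_of_nonneg_left hfirst hc2.le
  have hlast' := mul_le_mul_of_nonneg_left hlast hc2.le
  have hleft_eq : (a * y 0) ^ 2 / ((k - |a + b|) / 2) = 2 * a ^ 2 / (k - |a + b|) * y 0 ^ 2 := by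
    field_simp
  have hright_eq : (b * y (m + 2)) ^ 2 / ((k - |a + b|) / 2) =
      2 * b ^ 2 / (k - |a + b|) * y (m + 1 + 1) ^ 2 := by
    field_simp
  linarith

theorem sub_add_mul_integral_le_of_hasDerivAt {V V' g : ℝ → ℝ} {c t : ℝ} (ht : 0 ≤ t)
    (hV : ∀ s ∈ Set.Icc 0 t, HasDerivAt V (V' s) s) (hV' : IntervalIntegrable V' volume 0 t)
    (hg : IntervalIntegrable g volume 0 t) (hle : ∀ s ∈ Set.Icc 0 t, V' s + c * V s ≤ g s) :
    V t - V 0 + c * ∫ s in 0..t, V s ≤ ∫ s in 0..t, g s := by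
  have hVint : IntervalIntegrable V volume 0 t :=
    ContinuousOn.intervalIntegrable_of_Icc ht fun s hs =>
      (hV s hs).continuousAt.continuousWithinAt
  have hftc : ∫ s in 0..t, V' s = V t - V 0 :=
    intervalIntegral.integral_eq_sub_of_hasDerivAt (fun s hs => hV s (Set.uIcc_of_le ht ▸ hs)) hV'
  calc V t - V 0 + c * ∫ s in 0..t, V s = ∫ s in 0..t, (V' s + c * V s) := by
        rw [intervalIntegral.integral_add hV' (hVint.const_mul c),
          intervalIntegral.integral_const_mul, hftc]
    _ ≤ ∫ s in 0..t, g s :=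
        intervalIntegral.integral_mono_on ht (hV'.add (hVint.const_mul c)) hg hle

section String

variable {a b k t : ℝ} {n : ℕ} {x : ℕ → ℝ → ℝ}

theorem continuousOn_string (h0 : ContinuousOn (x 0) (Set.Icc 0 t))
    (hlast : ContinuousOn (x (n + 1)) (Set.Icc 0 t))
    (hx : ∀ j ∈ Icc 1 n, ∀ s ∈ Set.Icc 0 t,
      HasDerivAt (x j) (a * x (j - 1) s - k * x j s + b * x (j + 1) s) s)
    {j : ℕ} (hj : j ≤ n + 1) : ContinuousOn (x j) (Set.Icc 0 t) := by
  rcases Nat.eq_zero_or_pos j with rfl | hpos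
  · exact h0
  rcases hj.eq_or_lt with rfl | hlt
  · exact hlast
  exact fun s hs => (hx j (mem_Icc.2 ⟨hpos, by omega⟩) s hs).continuousAt.continuousWithinAt

theorem string_energy_integral_le (hc : 0 < k - |a + b|) (ht : 0 ≤ t)
    (h0 : ContinuousOn (x 0) (Set.Icc 0 t)) (hlast : ContinuousOn (x (n + 1)) (Set.Icc 0 t))
    (hx : ∀ j ∈ Icc 1 n, ∀ s ∈ Set.Icc 0 t,
      HasDerivAt (x j) (a * x (j - 1) s - k * x j s + b * x (j + 1) s) s) :
    (k - |a + b|) * ∫ s in 0..t, ∑ j ∈ Icc 1 n, x j s ^ 2 ≤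
      ∑ j ∈ Icc 1 n, x j 0 ^ 2 + 2 * a ^ 2 / (k - |a + b|) * (∫ s in 0..t, x 0 s ^ 2) +
        2 * b ^ 2 / (k - |a + b|) * (∫ s in 0..t, x (n + 1) s ^ 2) := by
  have hcont {j : ℕ} (hj : j ≤ n + 1) := continuousOn_string h0 hlast hx hj
  have hint {f : ℝ → ℝ} (hf : ContinuousOn f (Set.Icc 0 t)) : IntervalIntegrable f volume 0 t :=
    hf.intervalIntegrable_of_Icc ht
  have hV : ∀ s ∈ Set.Icc 0 t, HasDerivAt (fun s => ∑ j ∈ Icc 1 n, x j s ^ 2)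
      (∑ j ∈ Icc 1 n, 2 * x j s * (a * x (j - 1) s - k * x j s + b * x (j + 1) s)) s :=
    fun s hs => HasDerivAt.fun_sum fun j hj => by simpa [pow_one] using (hx j hj s hs).fun_pow 2
  have hV' : ContinuousOn
      (fun s => ∑ j ∈ Icc 1 n, 2 * x j s * (a * x (j - 1) s - k * x j s + b * x (j + 1) s))
      (Set.Icc 0 t) := by
    refine continuousOn_finsetSum _ fun j hj => ?_
    rw [mem_Icc] at hj
    have := hcont (j := j - 1) (by omega)
    have := hcont (j := j) (by omega)
    have := hcont (j := j + 1) (by omega)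
    fun_prop
  have hg : ContinuousOn (fun s => 2 * a ^ 2 / (k - |a + b|) * x 0 s ^ 2 +
      2 * b ^ 2 / (k - |a + b|) * x (n + 1) s ^ 2) (Set.Icc 0 t) := by fun_prop
  have key := sub_add_mul_integral_le_of_hasDerivAt (c := k - |a + b|) ht hV (hint hV') (hint hg)
    fun s _ => by linarith [string_energy_deriv_le hc (fun j => x j s) n]
  rw [intervalIntegral.integral_add (hint (by fun_prop)) (hint (by fun_prop)),
    intervalIntegral.integral_const_mul, intervalIntegral.integral_const_mul] at key
  have hVt : 0 ≤ ∑ j ∈ Icc 1 n, x j t ^ 2 := sum_nonneg fun j _ => sq_nonneg _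
  linarith

theorem string_component_integral_le (hc : 0 < k - |a + b|) (ht : 0 ≤ t)
    (h0 : ContinuousOn (x 0) (Set.Icc 0 t)) (hlast : ContinuousOn (x (n + 1)) (Set.Icc 0 t))
    (hx : ∀ j ∈ Icc 1 n, ∀ s ∈ Set.Icc 0 t,
      HasDerivAt (x j) (a * x (j - 1) s - k * x j s + b * x (j + 1) s) s)
    {i : ℕ} (hi : i ∈ Icc 1 n) :
    ∫ s in 0..t, x i s ^ 2 ≤
      2 * a ^ 2 / (k - |a + b|) ^ 2 * (∫ s in 0..t, x 0 s ^ 2) +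
        2 * b ^ 2 / (k - |a + b|) ^ 2 * (∫ s in 0..t, x (n + 1) s ^ 2) +
          1 / (k - |a + b|) * ∑ j ∈ Icc 1 n, x j 0 ^ 2 := by
  have hcont {j : ℕ} (hj : j ≤ n + 1) := (continuousOn_string h0 hlast hx hj).pow 2
  calc ∫ s in 0..t, x i s ^ 2 ≤ ∫ s in 0..t, ∑ j ∈ Icc 1 n, x j s ^ 2 := by
        have hsum : ContinuousOn (fun s => ∑ j ∈ Icc 1 n, x j s ^ 2) (Set.Icc 0 t) :=
          continuousOn_finsetSum _ fun j hj => hcont (by rw [mem_Icc] at hj; omega)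
        refine intervalIntegral.integral_mono_on ht
          ((hcont (by rw [mem_Icc] at hi; omega)).intervalIntegrable_of_Icc ht)
          (hsum.intervalIntegrable_of_Icc ht) fun s _ =>
            single_le_sum (f := fun j => x j s ^ 2) (fun j _ => sq_nonneg _) hi
    _ ≤ (∑ j ∈ Icc 1 n, x j 0 ^ 2 + 2 * a ^ 2 / (k - |a + b|) * (∫ s in 0..t, x 0 s ^ 2) +
        2 * b ^ 2 / (k - |a + b|) * (∫ s in 0..t, x (n + 1) s ^ 2)) / (k - |a + b|) := by
        rw [le_div_iff₀ hc, mul_comm]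
        exact string_energy_integral_le hc ht h0 hlast hx
    _ = _ := by field_simp; ring

end String

theorem linear_string_lyapunov_bidirectional (k a b : ℝ)
    (hcond : |a + b| < k) :
    ∃ K₁ K₂ K₃ : ℝ, 0 < K₁ ∧ 0 < K₂ ∧ 0 < K₃ ∧
      ∀ n : ℕ, ∀ u w : ℝ → ℝ,
        ContinuousOn u (Set.Ici 0) → ContinuousOn w (Set.Ici 0) →
        ∀ ξ : ℕ → ℝ, ∀ x : ℕ → ℝ → ℝ,
          (∀ t, x 0 t = u t) → (∀ t, x (n + 1) t = w t) →
          (∀ i, 1 ≤ i → i ≤ n → x i 0 = ξ i ∧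
            ∀ t ≥ (0:ℝ), HasDerivAt (x i)
              (a * x (i - 1) t - k * x i t + b * x (i + 1) t) t) →
          ∀ i, 1 ≤ i → i ≤ n → ∀ t ≥ (0:ℝ),
            l2Norm (x i) t ≤
              K₁ * l2Norm u t + K₂ * l2Norm w t +
              K₃ * Real.sqrt (∑ j ∈ Finset.Icc 1 n, (ξ j) ^ 2) := by
  have hc : 0 < k - |a + b| := sub_pos.2 hcond
  refine ⟨√(2 * a ^ 2 / (k - |a + b|) ^ 2) + 1, √(2 * b ^ 2 / (k - |a + b|) ^ 2) + 1,
    √(1 / (k - |a + b|)) + 1, by positivity, by positivity, by positivity, ?_⟩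
  intro n u w hu hw ξ x hx0 hxn1 hsol i hi1 hin t ht
  obtain rfl : x 0 = u := funext hx0
  obtain rfl : x (n + 1) = w := funext hxn1
  have hsol' (j : ℕ) (hj : j ∈ Icc 1 n) := hsol j (mem_Icc.1 hj).1 (mem_Icc.1 hj).2
  have hξ : ∑ j ∈ Icc 1 n, x j 0 ^ 2 = ∑ j ∈ Icc 1 n, ξ j ^ 2 :=
    sum_congr rfl fun j hj => by rw [(hsol' j hj).1]
  have hbound := string_component_integral_le hc ht (hu.mono Set.Icc_subset_Ici_self)
    (hw.mono Set.Icc_subset_Ici_self) (fun j hj s hs => (hsol' j hj).2 s hs.1)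
    (mem_Icc.2 ⟨hi1, hin⟩)
  rw [hξ] at hbound
  exact (Real.sqrt_le_sqrt hbound).trans <| sqrt_mul_add_mul_add_mul_le
    (by positivity) (by positivity) (by positivity)
    (le_sq_sqrt_add_one _) (le_sq_sqrt_add_one _) (le_sq_sqrt_add_one _)
    (intervalIntegral.integral_nonneg ht fun s _ => sq_nonneg _)
    (intervalIntegral.integral_nonneg ht fun s _ => sq_nonneg _)
    (sum_nonneg fun j _ => sq_nonneg _)
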